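/- Let D be a digraph and X, Y vertex sets (vertices of X with no ingoing edges, vertices of Y with no outgoing edges). Suppose there exist x ∈ X and y ∈ Y such that X−x is incompressible to Y−y in D, and suppose X is joinable to Y in D. Then X is incompressible to Y in D. -/

import Mathlib

/-!  Common framework: digraphs as edge sets on a vertex type, directed paths,
path-systems, separations, flames and largeness. -/

universe u

variable {V : Type u}

/-- A directed path in the digraph on `V` with edge set `E`, given by its
(nonempty, repetition-free) list of vertices `start :: rest`. -/
structure Dipath (E : Set (V × V)) : Type u where
  start : V
  rest : List V
  chain : List.Chain (fun a b => (a, b) ∈ E) start rest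
  nodup : (start :: rest).Nodup

namespace Dipath

variable {E : Set (V × V)}

/-- The list of vertices of the path. -/
def verts (p : Dipath E) : List V := p.start :: p.rest

/-- The terminal vertex of the path. -/
def last (p : Dipath E) : V := (p.start :: p.rest).getLast (List.cons_ne_nil _ _)

/-- The set of vertices of the path. -/
def support (p : Dipath E) : Set V := {v | v ∈ p.verts}

/-- The internal vertices of the path (all vertices except the first and the last). -/
def internal (p : Dipath E) : Set V := {v | v ∈ p.rest.dropLast}

/-- The list of (directed) edges of the path. -/
def edges (p : Dipath E) : List (V × V) := p.verts.zip p.rest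

/-- The set of edges of the path. -/
def edgeSet (p : Dipath E) : Set (V × V) := {e | e ∈ p.edges}

/-- The last edge of the path, if the path has at least one edge. -/
def lastEdge? (p : Dipath E) : Option (V × V) := p.edges.getLast?

end Dipath

section Defs

variable (E : Set (V × V))

/-- The set of ingoing edges of `v`. -/
def inEdges (v : V) : Set (V × V) := {e ∈ E | e.2 = v}

/-- The set of initial vertices of a set of paths. -/
def initVerts {E : Set (V × V)} (P : Set (Dipath E)) : Set V := Dipath.start '' P

/-- The set of terminal vertices of a set of paths. -/
def termVerts {E : Set (V × V)} (P : Set (Dipath E)) : Set V := Dipath.last '' P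

/-- The set of terminal edges of a set of paths. -/
def termEdges {E : Set (V × V)} (P : Set (Dipath E)) : Set (V × V) :=
  {e | ∃ p ∈ P, p.lastEdge? = some e}

/-- An `(r,v)`-path-system: a set of pairwise internally disjoint directed
paths from `r` to `v`. -/
def IsRVSystem (r v : V) (P : Set (Dipath E)) : Prop :=
  (∀ p ∈ P, p.start = r ∧ p.last = v) ∧
    P.Pairwise fun p q => p.support ∩ q.support ⊆ {r, v}

/-- An `(r,v)`-separation: a set of vertices avoiding `r` and `v` and meeting
every directed path from `r` to `v`. -/
def IsSeparation (r v : V) (S : Set V) : Prop :=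
  r ∉ S ∧ v ∉ S ∧ ∀ p : Dipath E, p.start = r → p.last = v → (p.support ∩ S).Nonempty

/-- A set of paths `P` and a vertex set `S` are orthogonal:  every path of `P`
meets `S` in exactly one vertex and every vertex of `S` lies on a path of `P`. -/
def Orthogonal {E : Set (V × V)} (P : Set (Dipath E)) (S : Set V) : Prop :=
  (∀ p ∈ P, ∃! x, x ∈ p.support ∩ S) ∧ ∀ x ∈ S, ∃ p ∈ P, x ∈ p.support

/-- An Erdős–Menger `(r,v)`-path-system: one orthogonal to some `(r,v)`-separation. -/
def IsEMSystem (r v : V) (P : Set (Dipath E)) : Prop :=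
  IsRVSystem E r v P ∧ ∃ S, IsSeparation E r v S ∧ Orthogonal P S

/-- An Erdős–Menger `(r,v)`-separation: one orthogonal to some `(r,v)`-path-system. -/
def IsEMSeparation (r v : V) (S : Set V) : Prop :=
  IsSeparation E r v S ∧ ∃ P : Set (Dipath E), IsRVSystem E r v P ∧ Orthogonal P S

/-- `𝒢_E(v)` (with root `r`): the collection of edge sets `I` that arise as the set of
terminal edges of an internally disjoint `(r,v)`-path-system in `E`. -/
def GSet (r v : V) : Set (Set (V × V)) :=
  {I | ∃ P : Set (Dipath E), IsRVSystem E r v P ∧ termEdges P = I}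

/-- A vertex-flame (with root `r`): for every `v ≠ r`, the whole in-edge set of `v`
is the terminal edge set of an internally disjoint `(r,v)`-path-system. -/
def IsFlame (r : V) : Prop := ∀ v, v ≠ r → inEdges E v ∈ GSet E r v

/-- `L` is `v`-large with respect to the digraph `E` rooted at `r`: `L` contains `rv`
whenever `E` does, and some Erdős–Menger `(r,v)`-path-system of `E - rv` lies in `L`. -/
def VLarge (r : V) (L : Set (V × V)) (v : V) : Prop :=
  ((r, v) ∈ E → (r, v) ∈ L) ∧
    ∃ P : Set (Dipath (E \ {(r, v)})),
      IsEMSystem (E \ {(r, v)}) r v P ∧ ∀ p ∈ P, p.edgeSet ⊆ L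

/-- `L` is large with respect to the digraph `E` rooted at `r`. -/
def Large (r : V) (L : Set (V × V)) : Prop := ∀ v, v ≠ r → VLarge E r L v

/-- An `(X,Y)`-path: from `X` to `Y`, internally disjoint from `X ∪ Y`. -/
def IsXYPath (X Y : Set V) (p : Dipath E) : Prop :=
  p.start ∈ X ∧ p.last ∈ Y ∧ ∀ w ∈ p.internal, w ∉ X ∪ Y

/-- An `(X,Y)`-path-system: pairwise disjoint `(X,Y)`-paths. -/
def IsXYSystem (X Y : Set V) (P : Set (Dipath E)) : Prop :=
  (∀ p ∈ P, IsXYPath E X Y p) ∧ P.Pairwise fun p q => Disjoint p.support q.support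

/-- `X` is joinable to `Y`: some `(X,Y)`-path-system covers `X` with its initial vertices. -/
def Joinable (X Y : Set V) : Prop :=
  ∃ P : Set (Dipath E), IsXYSystem E X Y P ∧ initVerts P = X

/-- `X` is incompressible to `Y`: `X` is joinable to `Y` and every witnessing
path-system covers `Y` with its terminal vertices. -/
def Incompressible (X Y : Set V) : Prop :=
  Joinable E X Y ∧
    ∀ P : Set (Dipath E), IsXYSystem E X Y P → initVerts P = X → termVerts P = Y

/-- An `(X,Y)`-separation: a vertex set meeting every `(X,Y)`-path. -/
def IsXYSeparation (X Y : Set V) (S : Set V) : Prop :=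
  ∀ p : Dipath E, IsXYPath E X Y p → (p.support ∩ S).Nonempty

/-- An Erdős–Menger `(X,Y)`-separation: one orthogonal to some `(X,Y)`-path-system. -/
def IsEMXYSeparation (X Y : Set V) (S : Set V) : Prop :=
  IsXYSeparation E X Y S ∧ ∃ P : Set (Dipath E), IsXYSystem E X Y P ∧ Orthogonal P S

/-- `X'` is `(X,Y)`-finitely extendable: every `O` with `X' ⊆ O ⊆ X` and `O \ X'`
finite is joinable to `Y`. -/
def FinExtendable (X Y X' : Set V) : Prop :=
  X' ⊆ X ∧ ∀ O, X' ⊆ O → O ⊆ X → (O \ X').Finite → Joinable E O Y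

/-- `S` separates the vertex `y` from `r`:  every directed path from `r` to `y` meets `S`. -/
def SeparatesFrom (r : V) (S : Set V) (y : V) : Prop :=
  ∀ p : Dipath E, p.start = r → p.last = y → (p.support ∩ S).Nonempty

/-- An `(X,y)`-path: from a vertex of `X` to `y`, internally disjoint from `X`. -/
def IsXyPath (X : Set V) (y : V) (p : Dipath E) : Prop :=
  p.start ∈ X ∧ p.last = y ∧ ∀ w ∈ p.internal, w ∉ X

/-- An `(X,y)`-path-system: `(X,y)`-paths, pairwise disjoint except possibly at `y`. -/
def IsXySystem (X : Set V) (y : V) (P : Set (Dipath E)) : Prop :=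
  (∀ p ∈ P, IsXyPath E X y p) ∧ P.Pairwise fun p q => p.support ∩ q.support ⊆ {y}

/-- An `(r,S)`-path: from `r` to a vertex of `S`, internally disjoint from `S`. -/
def IsRSPath (r : V) (S : Set V) (p : Dipath E) : Prop :=
  p.start = r ∧ p.last ∈ S ∧ ∀ w ∈ p.internal, w ∉ S

/-- An `(r,S)`-path-system: `(r,S)`-paths, pairwise disjoint apart from `r`. -/
def IsRSSystem (r : V) (S : Set V) (P : Set (Dipath E)) : Prop :=
  (∀ p ∈ P, IsRSPath E r S p) ∧ P.Pairwise fun p q => p.support ∩ q.support ⊆ {r}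

/-- `E` is a `G`-quasi-flame (with root `r`): for every `v ≠ r`, every set `I` of
ingoing edges of `v` with `I \ inEdges G v` finite lies in `𝒢_E(v)`. -/
def QuasiFlame (r : V) (G : Set (V × V)) : Prop :=
  ∀ v, v ≠ r → ∀ I, I ⊆ inEdges E v → (I \ inEdges G v).Finite → I ∈ GSet E r v

/-- The local connectivity `κ_E(r,v)`: the maximum size of an internally disjoint
`(r,v)`-path-system. -/
noncomputable def kappa (r v : V) : ℕ :=
  sSup {n | ∃ P : Set (Dipath E), IsRVSystem E r v P ∧ P.Finite ∧ P.ncard = n}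

end Defs

/-!
Let `P` be an `(X,Y)`-path-system covering `X` and `p` its path from `x`. If no other path of `P`
ends at `y`, the remaining paths join `X - x` to `Y - y`, hence cover `Y - y`, and `p` must end at
`y`. Otherwise some path from `x' ≠ x` ends at `y`; dropping it and `p` leaves a system joining
`(X - x) - x'` into `Y - y` that misses both the end of `p` and any vertex of `Y` missed by `P`.
So everything rests on: if `A` is incompressible to `B`, a system `Q` joining `A - a` into `B`
misses at most one vertex of `B`.

For this, reroute `Q` along a system `T` joining `A` to `B`: a path of `Q` may be entered at one
of its vertices by the `T`-path through that vertex, giving a hybrid path that follows `T` up to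
there and `Q` afterwards. Among the reroutings whose hybrid paths are disjoint and leave at most
one vertex of `A` unused, Zorn's lemma gives a maximal one: entry points only move forward, and
validity is a finitary condition. By maximality the `T`-path from the unused vertex, if any, meets
no hybrid path, so adding it yields a system covering `A` whose ends are those of `Q` plus one
vertex; by incompressibility these ends are all of `B`.
-/

namespace List

variable {α : Type*} {R : α → α → Prop} {p : α → Bool} {l m : List α}

theorem IsChain.takeWhile_append (hl : l.IsChain R) (hm : m.IsChain R)
    (hhead : m.head? = (l.dropWhile p).head?) : (l.takeWhile p ++ m).IsChain R := by
  rw [← takeWhile_append_dropWhile (p := p) (l := l), isChain_append] at hl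
  exact isChain_append.mpr ⟨hl.1, hm, hhead ▸ hl.2.2⟩

theorem head?_dropWhile_ne [DecidableEq α] {c : α} (hc : c ∈ l) :
    (l.dropWhile fun u => decide (u ≠ c)).head? = some c := by
  induction l with
  | nil => simp at hc
  | cons b t ih =>
    by_cases hb : b = c
    · simp [hb]
    · rw [dropWhile_cons_of_pos (by simpa using hb)]
      exact ih ((mem_cons.mp hc).resolve_left (Ne.symm hb))

theorem exists_eq_append_cons_of_exists {P : α → Prop} (h : ∃ v ∈ l, P v) :
    ∃ l₁ v l₂, l = l₁ ++ v :: l₂ ∧ P v ∧ ∀ u ∈ l₁, ¬ P u := by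
  classical
  obtain ⟨v, hv⟩ := Option.isSome_iff_exists.mp
    ((find?_isSome (xs := l) (p := fun v => decide (P v))).mpr (by simpa using h))
  obtain ⟨hPv, l₁, l₂, rfl, h₁⟩ := find?_eq_some_iff_append.mp hv
  exact ⟨l₁, v, l₂, rfl, by simpa using hPv, fun u hu => by simpa using h₁ u hu⟩

end List

theorem IsChain.exists_eqOn_csSup {ι : Type*} {c : Set (ι → ℕ)} (hc : IsChain (· ≤ ·) c)
    (hne : c.Nonempty) (hbdd : BddAbove c) {s : Set ι} (hs : s.Finite) :
    ∃ f ∈ c, Set.EqOn f (sSup c) s := by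
  have hle : ∀ f ∈ c, f ≤ sSup c := fun f hf => le_csSup hbdd hf
  induction s, hs using Set.Finite.induction_on with
  | empty => exact ⟨hne.some, hne.some_mem, Set.eqOn_empty _ _⟩
  | @insert i s _ _ ih =>
    obtain ⟨f, hf, hfs⟩ := ih
    obtain ⟨g, hg, hgi⟩ : sSup c i ∈ Function.eval i '' c := by
      rw [sSup_apply_eq_sSup_image]
      exact Nat.sSup_mem (hne.image _) ((Function.monotone_eval i).map_bddAbove hbdd)
    rcases hc.total hf hg with hfg | hgf
    · refine ⟨g, hg, Set.forall_mem_insert.mpr ⟨hgi, fun j hj => ?_⟩⟩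
      exact le_antisymm (hle g hg j) (hfs hj ▸ hfg j)
    · refine ⟨f, hf, Set.forall_mem_insert.mpr ⟨?_, hfs⟩⟩
      exact le_antisymm (hle f hf i) (hgi ▸ hgf i)

namespace Dipath

variable {E : Set (V × V)} {A B : Set V} {p q : Dipath E} {v : V}

theorem verts_ne_nil (p : Dipath E) : p.verts ≠ [] := List.cons_ne_nil _ _

theorem isChain_verts (p : Dipath E) : p.verts.IsChain (fun a b => (a, b) ∈ E) := p.chain

theorem head?_verts (p : Dipath E) : p.verts.head? = some p.start := rfl

theorem last_eq_getLast (p : Dipath E) : p.last = p.verts.getLast (verts_ne_nil p) := rfl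

theorem getLast?_verts (p : Dipath E) : p.verts.getLast? = some p.last :=
  List.getLast?_eq_some_getLast (verts_ne_nil p)

theorem mem_support_of_verts_eq {l₁ l₂ : List V} (h : p.verts = l₁ ++ v :: l₂) :
    v ∈ p.support := by
  show v ∈ p.verts
  rw [h]
  exact List.mem_append_cons_self

theorem start_mem_support (p : Dipath E) : p.start ∈ p.support := List.mem_cons_self

theorem last_mem_support (p : Dipath E) : p.last ∈ p.support := List.getLast_mem _

theorem ext_verts (h : p.verts = q.verts) : p = q := by
  cases p; cases q
  simp only [verts, List.cons.injEq] at h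
  obtain ⟨rfl, rfl⟩ := h
  rfl

theorem exists_verts_eq {l : List V} (hne : l ≠ []) (hl : l.IsChain (fun a b => (a, b) ∈ E))
    (hnd : l.Nodup) : ∃ p : Dipath E, p.verts = l := by
  obtain ⟨a, l, rfl⟩ := List.exists_cons_of_ne_nil hne
  exact ⟨⟨a, l, hl, hnd⟩, rfl⟩

theorem exists_in_edge_of_ne_start (hv : v ∈ p.support) (hne : v ≠ p.start) :
    ∃ u, (u, v) ∈ E := by
  obtain ⟨i, hi, rfl⟩ := List.mem_iff_getElem.mp hv
  obtain ⟨j, rfl⟩ : ∃ j, i = j + 1 :=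
    Nat.exists_eq_succ_of_ne_zero (by rintro rfl; exact hne rfl)
  exact ⟨_, p.isChain_verts.getElem j hi⟩

theorem exists_out_edge_of_ne_last (hv : v ∈ p.support) (hne : v ≠ p.last) :
    ∃ u, (v, u) ∈ E := by
  obtain ⟨i, hi, rfl⟩ := List.mem_iff_getElem.mp hv
  have : i + 1 < p.verts.length := by
    by_contra! h
    have hi' : i = p.verts.length - 1 := by omega
    exact hne (by simp only [last_eq_getLast, List.getLast_eq_getElem, hi'])
  exact ⟨_, p.isChain_verts.getElem i this⟩

theorem eq_start_of_mem (hA : ∀ e ∈ E, e.2 ∉ A) (hv : v ∈ p.support) (hvA : v ∈ A) :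
    v = p.start := by
  by_contra hne
  obtain ⟨u, hu⟩ := exists_in_edge_of_ne_start hv hne
  exact hA _ hu hvA

theorem eq_last_of_mem (hB : ∀ e ∈ E, e.1 ∉ B) (hv : v ∈ p.support) (hvB : v ∈ B) :
    v = p.last := by
  by_contra hne
  obtain ⟨u, hu⟩ := exists_out_edge_of_ne_last hv hne
  exact hB _ hu hvB

theorem mem_internal (hv : v ∈ p.internal) :
    v ∈ p.support ∧ v ≠ p.start ∧ v ≠ p.last := by
  have hrest : v ∈ p.rest := List.dropLast_subset _ hv
  obtain ⟨hstart, hnd⟩ := List.nodup_cons.mp p.nodup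
  refine ⟨List.mem_cons_of_mem _ hrest, fun h => hstart (h ▸ hrest), fun h => ?_⟩
  have hne : p.rest ≠ [] := List.ne_nil_of_mem hrest
  rw [last, List.getLast_cons hne] at h
  rw [← List.dropLast_append_getLast hne, List.nodup_append] at hnd
  exact hnd.2.2 _ hv _ (List.mem_singleton_self _) (h ▸ rfl)

theorem isXYPath (hA : ∀ e ∈ E, e.2 ∉ A) (hB : ∀ e ∈ E, e.1 ∉ B) (hs : p.start ∈ A)
    (hl : p.last ∈ B) : IsXYPath E A B p := by
  refine ⟨hs, hl, fun w hw hwAB => ?_⟩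
  obtain ⟨hw, hws, hwl⟩ := mem_internal hw
  rcases hwAB with hwA | hwB
  · exact hws (eq_start_of_mem hA hw hwA)
  · exact hwl (eq_last_of_mem hB hw hwB)

end Dipath

section PathSystems

variable {E : Set (V × V)} {A B : Set V} {P : Set (Dipath E)} {p q : Dipath E} {v : V}

open Classical in
noncomputable def pathThrough (P : Set (Dipath E)) (v : V) : Dipath E :=
  if h : ∃ p ∈ P, v ∈ p.support then h.choose
  else ⟨v, [], List.IsChain.singleton v, List.nodup_singleton v⟩

theorem pathThrough_mem (h : ∃ p ∈ P, v ∈ p.support) : pathThrough P v ∈ P := by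
  rw [pathThrough, dif_pos h]
  exact h.choose_spec.1

theorem mem_support_pathThrough (h : ∃ p ∈ P, v ∈ p.support) :
    v ∈ (pathThrough P v).support := by
  rw [pathThrough, dif_pos h]
  exact h.choose_spec.2

theorem eq_of_mem_support (hP : P.Pairwise fun p q => Disjoint p.support q.support)
    (hp : p ∈ P) (hq : q ∈ P) (hvp : v ∈ p.support) (hvq : v ∈ q.support) : p = q :=
  hP.eq hp hq (Set.not_disjoint_iff.mpr ⟨v, hvp, hvq⟩)

theorem pathThrough_eq (hP : P.Pairwise fun p q => Disjoint p.support q.support)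
    (hp : p ∈ P) (hv : v ∈ p.support) : pathThrough P v = p :=
  eq_of_mem_support hP (pathThrough_mem ⟨p, hp, hv⟩) hp
    (mem_support_pathThrough ⟨p, hp, hv⟩) hv

theorem eq_of_last_eq (hP : P.Pairwise fun p q => Disjoint p.support q.support)
    (hp : p ∈ P) (hq : q ∈ P) (h : p.last = q.last) : p = q :=
  eq_of_mem_support hP hp hq p.last_mem_support (h ▸ q.last_mem_support)

theorem IsXYSystem.termVerts_subset (hP : IsXYSystem E A B P) : termVerts P ⊆ B := by
  rintro _ ⟨p, hp, rfl⟩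
  exact (hP.1 p hp).2.1

theorem IsXYSystem.insert (hP : IsXYSystem E A B P) (hp : IsXYPath E A B p)
    (hdisj : ∀ q ∈ P, Disjoint p.support q.support) : IsXYSystem E A B (insert p P) :=
  ⟨Set.forall_mem_insert.mpr ⟨hp, hP.1⟩,
    Set.pairwise_insert.mpr ⟨hP.2, fun q hq _ => ⟨hdisj q hq, (hdisj q hq).symm⟩⟩⟩

theorem IsXYSystem.restrict {A' : Set V} {a b : V} (hA : ∀ e ∈ E, e.2 ∉ A)
    (hB : ∀ e ∈ E, e.1 ∉ B) (hP : IsXYSystem E A B P) (hPinit : initVerts P = A)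
    (ha : a ∈ A') (hb : ∀ p ∈ P, p.last = b → p.start ∈ A') :
    IsXYSystem E (A \ {a}) (B \ {b}) {p ∈ P | p.start ∉ A'} ∧
      initVerts {p ∈ P | p.start ∉ A'} = A \ A' := by
  refine ⟨⟨fun p ⟨hp, hpA'⟩ => ?_, hP.2.mono (Set.sep_subset _ _)⟩, ?_⟩
  · exact Dipath.isXYPath (fun e he h => hA e he h.1) (fun e he h => hB e he h.1)
      ⟨(hP.1 p hp).1, fun h => hpA' (h ▸ ha)⟩ ⟨(hP.1 p hp).2.1, fun h => hpA' (hb p hp h)⟩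
  ext w
  constructor
  · rintro ⟨p, ⟨hp, hpA'⟩, rfl⟩
    exact ⟨(hP.1 p hp).1, hpA'⟩
  · rintro ⟨hw, hwA'⟩
    obtain ⟨p, hp, rfl⟩ : w ∈ initVerts P := hPinit ▸ hw
    exact ⟨p, ⟨hp, hwA'⟩, rfl⟩

end PathSystems

structure Rerouting (E : Set (V × V)) where
  A : Set V
  B : Set V
  a : V
  T : Set (Dipath E)
  Q : Set (Dipath E)
  no_edge_into : ∀ e ∈ E, e.2 ∉ A
  no_edge_out : ∀ e ∈ E, e.1 ∉ B
  isXYSystem_T : IsXYSystem E A B T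
  initVerts_T : initVerts T = A
  isXYSystem_Q : IsXYSystem E A B Q
  initVerts_Q : initVerts Q = A \ {a}

namespace Rerouting

variable {E : Set (V × V)} (R : Rerouting E) {k : V → ℕ} {p : Dipath E} {z w v : V} {n : ℕ}

noncomputable def qPath (z : V) : Dipath E := pathThrough R.Q z

noncomputable def tPath (v : V) : Dipath E := pathThrough R.T v

noncomputable def cut (z : V) (n : ℕ) : V := (R.qPath z).verts.getD n z

/- State `n` at `z`: the `Q`-path from `z` is entered at its `n`-th vertex `c` by the `T`-path
through `c`; the hybrid path follows that `T`-path up to `c`, then the `Q`-path. -/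
open Classical in
noncomputable def hybrid (z : V) (n : ℕ) : List V :=
  (R.tPath (R.cut z n)).verts.takeWhile (fun u => decide (u ≠ R.cut z n)) ++
    (R.qPath z).verts.drop n

noncomputable def owner (z : V) (n : ℕ) : V := (R.tPath (R.cut z n)).start

noncomputable def served (k : V → ℕ) : Set V := (fun z => R.owner z (k z)) '' (R.A \ {R.a})

structure Valid (k : V → ℕ) : Prop where
  lt_length : ∀ z, k z < (R.qPath z).verts.length
  cut_mem : ∀ z ∈ R.A \ {R.a}, ∃ t ∈ R.T, R.cut z (k z) ∈ t.support
  nodup : ∀ z ∈ R.A \ {R.a}, (R.hybrid z (k z)).Nodup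
  disjoint : (R.A \ {R.a}).Pairwise fun z₁ z₂ =>
    (R.hybrid z₁ (k z₁)).Disjoint (R.hybrid z₂ (k z₂))
  subsingleton : (R.A \ R.served k).Subsingleton

noncomputable def hybridSystem (k : V → ℕ) : Set (Dipath E) :=
  {p | ∃ z ∈ R.A \ {R.a}, p.verts = R.hybrid z (k z)}

noncomputable def crossing (w : V) : Set V :=
  {z ∈ R.A \ {R.a} | ∃ u ∈ (R.qPath z).support, u ∈ (R.tPath w).support}

theorem qPath_mem (hz : z ∈ R.A \ {R.a}) : R.qPath z ∈ R.Q := by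
  rw [← R.initVerts_Q] at hz
  obtain ⟨p, hp, rfl⟩ := hz
  exact pathThrough_mem ⟨p, hp, p.start_mem_support⟩

theorem qPath_start (hz : z ∈ R.A \ {R.a}) : (R.qPath z).start = z := by
  rw [← R.initVerts_Q] at hz
  obtain ⟨p, hp, rfl⟩ := hz
  rw [qPath, pathThrough_eq R.isXYSystem_Q.2 hp p.start_mem_support]

theorem qPath_eq (hp : p ∈ R.Q) (hv : v ∈ p.support) : R.qPath v = p :=
  pathThrough_eq R.isXYSystem_Q.2 hp hv

theorem tPath_eq (hp : p ∈ R.T) (hv : v ∈ p.support) : R.tPath v = p :=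
  pathThrough_eq R.isXYSystem_T.2 hp hv

theorem tPath_mem (hv : ∃ t ∈ R.T, v ∈ t.support) : R.tPath v ∈ R.T := pathThrough_mem hv

theorem mem_tPath (hv : ∃ t ∈ R.T, v ∈ t.support) : v ∈ (R.tPath v).support :=
  mem_support_pathThrough hv

theorem exists_tPath_of_mem (hw : w ∈ R.A) : ∃ t ∈ R.T, w ∈ t.support := by
  rw [← R.initVerts_T] at hw
  obtain ⟨t, ht, rfl⟩ := hw
  exact ⟨t, ht, t.start_mem_support⟩

theorem tPath_start (hw : w ∈ R.A) : (R.tPath w).start = w :=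
  (Dipath.eq_start_of_mem R.no_edge_into (R.mem_tPath (R.exists_tPath_of_mem hw)) hw).symm

theorem crossing_finite (w : V) : (R.crossing w).Finite := by
  refine ((R.tPath w).verts.finite_toSet.image fun u => (R.qPath u).start).subset ?_
  rintro z ⟨hz, u, huz, huw⟩
  refine ⟨u, huw, ?_⟩
  show (R.qPath u).start = z
  rw [R.qPath_eq (R.qPath_mem hz) huz, R.qPath_start hz]

theorem cut_eq (h : n < (R.qPath z).verts.length) : R.cut z n = (R.qPath z).verts[n] :=
  List.getD_eq_getElem _ _ h

theorem drop_eq_cut_cons (h : n < (R.qPath z).verts.length) :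
    (R.qPath z).verts.drop n = R.cut z n :: (R.qPath z).verts.drop (n + 1) := by
  rw [R.cut_eq h, List.drop_eq_getElem_cons h]

theorem owner_mem (hcut : ∃ t ∈ R.T, R.cut z n ∈ t.support) : R.owner z n ∈ R.A := by
  rw [← R.initVerts_T]
  exact ⟨_, R.tPath_mem hcut, rfl⟩

theorem head?_hybrid (h : n < (R.qPath z).verts.length) :
    (R.hybrid z n).head? = some (R.owner z n) := by
  rw [hybrid, R.drop_eq_cut_cons h, owner]
  by_cases hs : (R.tPath (R.cut z n)).start = R.cut z n
  · simp [Dipath.verts, hs]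
  · simp [Dipath.verts, hs]

theorem getLast?_hybrid (h : n < (R.qPath z).verts.length) :
    (R.hybrid z n).getLast? = some (R.qPath z).last := by
  rw [hybrid, List.getLast?_append, R.drop_eq_cut_cons h, ← R.drop_eq_cut_cons h,
    List.getLast?_drop, if_neg (by omega), Dipath.getLast?_verts]
  rfl

theorem mem_hybrid (h : n < (R.qPath z).verts.length)
    (hcut : ∃ t ∈ R.T, R.cut z n ∈ t.support) (hv : v ∈ R.hybrid z n) :
    v ∈ (R.tPath (R.cut z n)).support ∨ v ∈ (R.qPath z).verts.drop (n + 1) := by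
  rw [hybrid, List.mem_append, R.drop_eq_cut_cons h, List.mem_cons] at hv
  rcases hv with hv | rfl | hv
  · exact Or.inl ((List.takeWhile_sublist _).subset hv)
  · exact Or.inl (R.mem_tPath hcut)
  · exact Or.inr hv

theorem isChain_hybrid (h : n < (R.qPath z).verts.length)
    (hcut : ∃ t ∈ R.T, R.cut z n ∈ t.support) :
    (R.hybrid z n).IsChain fun u v => (u, v) ∈ E := by
  classical
  refine (R.tPath _).isChain_verts.takeWhile_append (((R.qPath z).isChain_verts).drop n) ?_
  rw [List.head?_dropWhile_ne (R.mem_tPath hcut), R.drop_eq_cut_cons h, List.head?_cons]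

theorem drop_subset_hybrid {j : ℕ} (hj : n ≤ j) : (R.qPath z).verts.drop j ⊆ R.hybrid z n :=
  fun _ hu => List.mem_append_right _ ((List.drop_sublist_drop_left _ hj).subset hu)

theorem hybrid_eq_append_drop {d : V} {j : ℕ} {l₁ l₂ : List V} (hd : d ∈ R.A)
    (hsplit : (R.tPath d).verts = l₁ ++ R.cut z j :: l₂) (hl₁ : R.cut z j ∉ l₁) :
    R.hybrid z j = l₁ ++ (R.qPath z).verts.drop j := by
  have hcut : R.cut z j ∈ (R.tPath d).support := Dipath.mem_support_of_verts_eq hsplit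
  rw [hybrid, R.tPath_eq (R.tPath_mem (R.exists_tPath_of_mem hd)) hcut, hsplit,
    List.takeWhile_append_of_pos, List.takeWhile_cons_of_neg (by simp), List.append_nil]
  intro u hu
  simp only [ne_eq, decide_eq_true_eq]
  rintro rfl
  exact hl₁ hu

theorem cut_zero (hz : z ∈ R.A \ {R.a}) : R.cut z 0 = z := by
  rw [R.cut_eq (List.length_pos_of_ne_nil (Dipath.verts_ne_nil _))]
  exact R.qPath_start hz

theorem owner_zero (hz : z ∈ R.A \ {R.a}) : R.owner z 0 = z := by
  rw [owner, R.cut_zero hz, R.tPath_start hz.1]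

theorem hybrid_zero (hz : z ∈ R.A \ {R.a}) : R.hybrid z 0 = (R.qPath z).verts := by
  have h := R.tPath_start hz.1
  rw [hybrid, R.cut_zero hz, List.drop_zero, Dipath.verts, h]
  simp

theorem valid_zero : R.Valid 0 where
  lt_length z := List.length_pos_of_ne_nil (Dipath.verts_ne_nil _)
  cut_mem z hz := by
    rw [Pi.zero_apply, R.cut_zero hz]
    exact R.exists_tPath_of_mem hz.1
  nodup z hz := by
    rw [Pi.zero_apply, R.hybrid_zero hz]
    exact (R.qPath z).nodup
  disjoint z₁ hz₁ z₂ hz₂ hne := by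
    simp only [Pi.zero_apply]
    rw [R.hybrid_zero hz₁, R.hybrid_zero hz₂]
    refine fun v hv₁ hv₂ => hne ?_
    rw [← R.qPath_start hz₁, ← R.qPath_start hz₂,
      eq_of_mem_support R.isXYSystem_Q.2 (R.qPath_mem hz₁) (R.qPath_mem hz₂) hv₁ hv₂]
  subsingleton := by
    refine (Set.subsingleton_singleton (a := R.a)).anti fun w hw => ?_
    by_contra hwa
    obtain ⟨hwA, hw⟩ := hw
    exact hw ⟨w, ⟨hwA, hwa⟩, R.owner_zero ⟨hwA, hwa⟩⟩

theorem bddAbove_setOf_valid : BddAbove {k | R.Valid k} :=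
  ⟨fun z => (R.qPath z).verts.length, fun _ hk z => (hk.lt_length z).le⟩

namespace Valid

variable {R} {d : V}

theorem start_eq (hk : R.Valid k) (hp : p.verts = R.hybrid z (k z)) :
    p.start = R.owner z (k z) :=
  Option.some.inj (p.head?_verts.symm.trans (hp ▸ R.head?_hybrid (hk.lt_length z)))

theorem last_eq (hk : R.Valid k) (hp : p.verts = R.hybrid z (k z)) :
    p.last = (R.qPath z).last :=
  Option.some.inj (p.getLast?_verts.symm.trans (hp ▸ R.getLast?_hybrid (hk.lt_length z)))

theorem served_subset (hk : R.Valid k) : R.served k ⊆ R.A := by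
  rintro _ ⟨z, hz, rfl⟩
  exact R.owner_mem (hk.cut_mem z hz)

theorem isXYSystem_hybridSystem (hk : R.Valid k) :
    IsXYSystem E R.A R.B (R.hybridSystem k) := by
  refine ⟨?_, ?_⟩
  · rintro p ⟨z, hz, hp⟩
    refine Dipath.isXYPath R.no_edge_into R.no_edge_out ?_ ?_
    · rw [hk.start_eq hp]
      exact R.owner_mem (hk.cut_mem z hz)
    · rw [hk.last_eq hp]
      exact (R.isXYSystem_Q.1 _ (R.qPath_mem hz)).2.1
  · rintro p ⟨z₁, hz₁, hp⟩ q ⟨z₂, hz₂, hq⟩ hpq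
    have hz : z₁ ≠ z₂ := by
      rintro rfl
      exact hpq (Dipath.ext_verts (hp.trans hq.symm))
    exact Set.disjoint_left.mpr fun v hvp hvq =>
      hk.disjoint hz₁ hz₂ hz (hp ▸ hvp : v ∈ _) (hq ▸ hvq : v ∈ _)

theorem initVerts_hybridSystem (hk : R.Valid k) :
    initVerts (R.hybridSystem k) = R.served k := by
  ext w
  constructor
  · rintro ⟨p, ⟨z, hz, hp⟩, rfl⟩
    exact ⟨z, hz, (hk.start_eq hp).symm⟩
  · rintro ⟨z, hz, rfl⟩
    have hne : R.hybrid z (k z) ≠ [] := fun h => by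
      simpa [h] using R.head?_hybrid (hk.lt_length z)
    obtain ⟨p, hp⟩ := Dipath.exists_verts_eq hne
      (R.isChain_hybrid (hk.lt_length z) (hk.cut_mem z hz)) (hk.nodup z hz)
    exact ⟨p, ⟨z, hz, hp⟩, hk.start_eq hp⟩

theorem termVerts_hybridSystem_subset (hk : R.Valid k) :
    termVerts (R.hybridSystem k) ⊆ termVerts R.Q := by
  rintro _ ⟨p, ⟨z, hz, hp⟩, rfl⟩
  exact ⟨R.qPath z, R.qPath_mem hz, (hk.last_eq hp).symm⟩

theorem mem_crossing (hk : R.Valid k) (hz : z ∈ R.A \ {R.a}) :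
    z ∈ R.crossing (R.owner z (k z)) := by
  have hcut := hk.cut_mem z hz
  have ht : R.tPath (R.owner z (k z)) = R.tPath (R.cut z (k z)) :=
    R.tPath_eq (R.tPath_mem hcut) (R.tPath _).start_mem_support
  refine ⟨hz, R.cut z (k z), ?_, ht ▸ R.mem_tPath hcut⟩
  rw [R.cut_eq (hk.lt_length z)]
  exact List.getElem_mem _

theorem mem_served_of_eqOn {k' : V → ℕ} (hk : R.Valid k) (hkk' : Set.EqOn k k' (R.crossing w))
    (hw : w ∈ R.served k) : w ∈ R.served k' := by
  obtain ⟨z, hz, rfl⟩ := hw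
  refine ⟨z, hz, ?_⟩
  show R.owner z (k' z) = R.owner z (k z)
  rw [hkk' (hk.mem_crossing hz)]

/- The `T`-paths are disjoint, so a vertex of the `T`-path of `d` on the `T`-part of a hybrid
path, or at its entry vertex, would make `d` its owner. -/
theorem exists_lt_cut_eq (hk : R.Valid k) (hd : d ∈ R.A \ R.served k) (hz : z ∈ R.A \ {R.a})
    (hv : v ∈ R.hybrid z (k z)) (hvd : v ∈ (R.tPath d).support) :
    ∃ j, k z < j ∧ j < (R.qPath z).verts.length ∧ R.cut z j = v := by
  rcases R.mem_hybrid (hk.lt_length z) (hk.cut_mem z hz) hv with hvt | hv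
  · refine absurd ⟨z, hz, ?_⟩ hd.2
    show R.owner z (k z) = d
    rw [owner, eq_of_mem_support R.isXYSystem_T.2 (R.tPath_mem (hk.cut_mem z hz))
      (R.tPath_mem (R.exists_tPath_of_mem hd.1)) hvt hvd, R.tPath_start hd.1]
  · obtain ⟨i, hi, rfl⟩ := List.mem_iff_getElem.mp hv
    rw [List.length_drop] at hi
    refine ⟨k z + 1 + i, by omega, by omega, ?_⟩
    rw [R.cut_eq (by omega), List.getElem_drop]

theorem diff_served_update_subset [DecidableEq V] (hk : R.Valid k)
    (hd : d ∈ R.A \ R.served k) (hz : z ∈ R.A \ {R.a}) {j : ℕ} (hj : R.owner z j = d) :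
    R.A \ R.served (Function.update k z j) ⊆ {R.owner z (k z)} := by
  rintro w ⟨hwA, hw⟩
  by_contra hwz
  have hwd : w ≠ d := by
    rintro rfl
    exact hw ⟨z, hz, by dsimp only; rw [Function.update_self, hj]⟩
  obtain ⟨z', hz', rfl⟩ : w ∈ R.served k :=
    by_contra fun h => hwd (hk.subsingleton ⟨hwA, h⟩ hd)
  have hne : z' ≠ z := by
    rintro rfl
    exact hwz rfl
  exact hw ⟨z', hz', by dsimp only; rw [Function.update_of_ne hne]⟩

theorem update [DecidableEq V] (hk : R.Valid k) (hd : d ∈ R.A \ R.served k)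
    (hz : z ∈ R.A \ {R.a}) {j : ℕ} (hkj : k z < j) (hj : j < (R.qPath z).verts.length)
    {l₁ l₂ : List V} (hsplit : (R.tPath d).verts = l₁ ++ R.cut z j :: l₂)
    (hl₁ : ∀ u ∈ l₁, ¬ ∃ z' ∈ R.A \ {R.a}, u ∈ R.hybrid z' (k z')) :
    R.Valid (Function.update k z j) := by
  have hdrop := R.drop_subset_hybrid (z := z) hkj.le
  have hcut : R.cut z j ∈ R.hybrid z (k z) :=
    hdrop (by rw [R.drop_eq_cut_cons hj]; exact List.mem_cons_self)
  have hnew := R.hybrid_eq_append_drop hd.1 hsplit fun h => hl₁ _ h ⟨z, hz, hcut⟩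
  have hcutd : R.cut z j ∈ (R.tPath d).support := Dipath.mem_support_of_verts_eq hsplit
  have hdT := R.tPath_mem (R.exists_tPath_of_mem hd.1)
  have hdisj : ∀ z' ∈ R.A \ {R.a}, z' ≠ z →
      (R.hybrid z j).Disjoint (R.hybrid z' (k z')) := by
    intro z' hz' hne
    rw [hnew]
    exact List.disjoint_append_left.mpr ⟨fun u hu hu' => hl₁ u hu ⟨z', hz', hu'⟩,
      List.disjoint_of_subset_left hdrop (hk.disjoint hz hz' hne.symm)⟩
  constructor
  · intro z'
    rcases eq_or_ne z' z with rfl | hne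
    · rwa [Function.update_self]
    · rw [Function.update_of_ne hne]
      exact hk.lt_length z'
  · intro z' hz'
    rcases eq_or_ne z' z with rfl | hne
    · rw [Function.update_self]
      exact ⟨_, hdT, hcutd⟩
    · rw [Function.update_of_ne hne]
      exact hk.cut_mem z' hz'
  · intro z' hz'
    rcases eq_or_ne z' z with rfl | hne
    · have hl₁nd : l₁.Nodup := by
        have h := (R.tPath d).nodup
        rw [← Dipath.verts, hsplit] at h
        exact h.sublist (List.sublist_append_left _ _)
      rw [Function.update_self, hnew]
      exact List.nodup_append.mpr ⟨hl₁nd, (R.qPath z').nodup.sublist (List.drop_sublist _ _),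
        fun u hu u' hu' huu => hl₁ u hu ⟨z', hz', hdrop (huu ▸ hu')⟩⟩
    · rw [Function.update_of_ne hne]
      exact hk.nodup z' hz'
  · intro z₁ hz₁ z₂ hz₂ hne
    simp only [Function.update_apply]
    split_ifs with h₁ h₂ h₂
    · exact absurd (h₁.trans h₂.symm) hne
    · exact h₁ ▸ hdisj z₂ hz₂ h₂
    · exact h₂ ▸ (hdisj z₁ hz₁ h₁).symm
    · exact hk.disjoint hz₁ hz₂ hne
  · refine Set.subsingleton_singleton.anti (hk.diff_served_update_subset hd hz ?_)
    rw [owner, R.tPath_eq hdT hcutd, R.tPath_start hd.1]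

theorem exists_gt (hk : R.Valid k) (hd : d ∈ R.A \ R.served k)
    (hit : ∃ v ∈ (R.tPath d).verts, ∃ z ∈ R.A \ {R.a}, v ∈ R.hybrid z (k z)) :
    ∃ k', R.Valid k' ∧ k < k' := by
  classical
  obtain ⟨l₁, v, l₂, hsplit, ⟨z, hz, hvz⟩, hl₁⟩ :=
    List.exists_eq_append_cons_of_exists hit
  obtain ⟨j, hkj, hj, rfl⟩ :=
    hk.exists_lt_cut_eq hd hz hvz (Dipath.mem_support_of_verts_eq hsplit)
  exact ⟨_, hk.update hd hz hkj hj hsplit hl₁, lt_update_self_iff.mpr hkj⟩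

end Valid

/- Each condition in `Valid` involves finitely many coordinates, so it holds at the supremum of
a chain as soon as it holds at a member of the chain agreeing with the supremum there. -/
theorem valid_sSup {c : Set (V → ℕ)} (hcv : c ⊆ {k | R.Valid k}) (hc : IsChain (· ≤ ·) c)
    (hne : c.Nonempty) : R.Valid (sSup c) := by
  have agree {s : Set V} (hs : s.Finite) :=
    hc.exists_eqOn_csSup hne (R.bddAbove_setOf_valid.mono hcv) hs
  constructor
  · intro z
    obtain ⟨f, hf, hfz⟩ := agree (Set.finite_singleton z)
    exact hfz rfl ▸ (hcv hf).lt_length z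
  · intro z hz
    obtain ⟨f, hf, hfz⟩ := agree (Set.finite_singleton z)
    exact hfz rfl ▸ (hcv hf).cut_mem z hz
  · intro z hz
    obtain ⟨f, hf, hfz⟩ := agree (Set.finite_singleton z)
    exact hfz rfl ▸ (hcv hf).nodup z hz
  · intro z₁ hz₁ z₂ hz₂ hne
    obtain ⟨f, hf, hfz⟩ := agree (Set.toFinite {z₁, z₂})
    rw [← hfz (Set.mem_insert _ _), ← hfz (Set.mem_insert_of_mem _ rfl)]
    exact (hcv hf).disjoint hz₁ hz₂ hne
  · intro w hw w' hw'
    obtain ⟨f, hf, hfw⟩ := agree ((R.crossing_finite w).union (R.crossing_finite w'))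
    exact (hcv hf).subsingleton
      ⟨hw.1, fun h => hw.2 ((hcv hf).mem_served_of_eqOn (hfw.mono Set.subset_union_left) h)⟩
      ⟨hw'.1, fun h => hw'.2 ((hcv hf).mem_served_of_eqOn (hfw.mono Set.subset_union_right) h)⟩

theorem exists_cover_termVerts_subset_insert : ∃ S b, IsXYSystem E R.A R.B S ∧
    initVerts S = R.A ∧ termVerts S ⊆ insert b (termVerts R.Q) := by
  obtain ⟨k, -, hk, hmax⟩ := zorn_le_nonempty₀ {k | R.Valid k} (fun c hcv hc f hf =>
    ⟨sSup c, R.valid_sSup hcv hc ⟨f, hf⟩,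
      fun _ hg => le_csSup (R.bddAbove_setOf_valid.mono hcv) hg⟩) 0 R.valid_zero
  rcases (R.A \ R.served k).eq_empty_or_nonempty with hall | ⟨d, hd⟩
  · refine ⟨R.hybridSystem k, R.a, hk.isXYSystem_hybridSystem, ?_,
      hk.termVerts_hybridSystem_subset.trans (Set.subset_insert _ _)⟩
    rw [hk.initVerts_hybridSystem]
    exact hk.served_subset.antisymm (Set.sdiff_eq_empty.mp hall)
  by_cases hit : ∃ v ∈ (R.tPath d).verts, ∃ z ∈ R.A \ {R.a}, v ∈ R.hybrid z (k z)
  · obtain ⟨k', hk', hlt⟩ := hk.exists_gt hd hit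
    exact absurd (hmax hk' hlt.le) hlt.not_ge
  have hdT := R.tPath_mem (R.exists_tPath_of_mem hd.1)
  refine ⟨insert (R.tPath d) (R.hybridSystem k), (R.tPath d).last, ?_, ?_, ?_⟩
  · refine hk.isXYSystem_hybridSystem.insert (R.isXYSystem_T.1 _ hdT) ?_
    rintro p ⟨z, hz, hp⟩
    exact Set.disjoint_left.mpr fun v hvd hvp => hit ⟨v, hvd, z, hz, hp ▸ hvp⟩
  · rw [initVerts, Set.image_insert_eq, ← initVerts, hk.initVerts_hybridSystem,
      R.tPath_start hd.1]
    refine (Set.insert_subset hd.1 hk.served_subset).antisymm fun w hw => ?_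
    by_cases h : w ∈ R.served k
    · exact Or.inr h
    · exact Or.inl (hk.subsingleton ⟨hw, h⟩ hd)
  · rw [termVerts, Set.image_insert_eq, ← termVerts]
    exact Set.insert_subset_insert hk.termVerts_hybridSystem_subset

end Rerouting

theorem Incompressible.subsingleton_diff_termVerts {E : Set (V × V)} {A B : Set V}
    {Q : Set (Dipath E)} {a : V} (hinc : Incompressible E A B) (hA : ∀ e ∈ E, e.2 ∉ A)
    (hB : ∀ e ∈ E, e.1 ∉ B) (hQ : IsXYSystem E A B Q) (hQinit : initVerts Q = A \ {a}) :
    (B \ termVerts Q).Subsingleton := by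
  obtain ⟨⟨T, hT, hTinit⟩, honto⟩ := hinc
  obtain ⟨S, b, hS, hSinit, hSterm⟩ :=
    (Rerouting.mk A B a T Q hA hB hT hTinit hQ hQinit).exists_cover_termVerts_subset_insert
  have hb {b'} (hb' : b' ∈ B \ termVerts Q) : b' = b :=
    (hSterm (honto S hS hSinit ▸ hb'.1 : b' ∈ termVerts S)).resolve_right hb'.2
  exact fun b₁ hb₁ b₂ hb₂ => (hb hb₁).trans (hb hb₂).symm

theorem stmt7_general {V : Type u} (E : Set (V × V)) (X Y : Set V)
    (hX : ∀ e ∈ E, e.2 ∉ X) (hY : ∀ e ∈ E, e.1 ∉ Y)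
    (x : V) (hx : x ∈ X) (y : V)
    (hinc : Incompressible E (X \ {x}) (Y \ {y})) (hjoin : Joinable E X Y) :
    Incompressible E X Y := by
  refine ⟨hjoin, fun P hP hPinit => hP.termVerts_subset.antisymm fun b hb => ?_⟩
  obtain ⟨px, hpx, rfl⟩ : x ∈ initVerts P := hPinit ▸ hx
  have hstart {p q : Dipath E} (hp : p ∈ P) (hq : q ∈ P) (h : p.last = q.last) :
      p.start = q.start := congrArg Dipath.start (eq_of_last_eq hP.2 hp hq h)
  have hlast {X' : Set V} (hX' : px.start ∈ X') :
      px.last ∉ termVerts {p ∈ P | p.start ∉ X'} :=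
    fun ⟨p, ⟨hp, hpX'⟩, hpl⟩ => hpX' (hstart hp hpx hpl ▸ hX')
  by_cases hfull : ∀ p ∈ P, p.last = y → p.start ∈ ({px.start} : Set V)
  · obtain ⟨hQ, hQinit⟩ := hP.restrict hX hY hPinit (Set.mem_singleton _) hfull
    have hQterm := hinc.2 _ hQ hQinit
    rcases eq_or_ne b y with rfl | hby
    · exact ⟨px, hpx, by_contra fun h =>
        hlast (Set.mem_singleton _) (hQterm ▸ ⟨(hP.1 px hpx).2.1, h⟩)⟩
    · have hbQ : b ∈ termVerts {p ∈ P | p.start ∉ ({px.start} : Set V)} :=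
        hQterm ▸ ⟨hb, hby⟩
      exact Set.image_mono (Set.sep_subset _ _) hbQ
  simp only [not_forall] at hfull
  obtain ⟨q, hq, hqy, hqx⟩ := hfull
  obtain ⟨hQ, hQinit⟩ := hP.restrict hX hY hPinit (Set.mem_insert _ {q.start})
    fun p hp h => Or.inr (hstart hp hq (h.trans hqy.symm))
  rw [← Set.singleton_union, ← Set.sdiff_sdiff] at hQinit
  by_contra hbP
  have hpxy : px.last ≠ y := fun h => hqx (hstart hq hpx (hqy.trans h.symm))
  have hby : b ≠ y := fun h => hbP ⟨q, hq, hqy.trans h.symm⟩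
  have hb_eq := hinc.subsingleton_diff_termVerts (fun e he h => hX e he h.1)
    (fun e he h => hY e he h.1) hQ hQinit
    ⟨⟨(hP.1 px hpx).2.1, hpxy⟩, hlast (Set.mem_insert _ _)⟩
    ⟨⟨hb, hby⟩, fun ⟨p, ⟨hp, _⟩, hpb⟩ => hbP ⟨p, hp, hpb⟩⟩
  exact hbP (hb_eq ▸ ⟨px, hpx, rfl⟩)

/-- If `X - x` is incompressible to `Y - y` and `X` is joinable to `Y`, then `X` is
incompressible to `Y`. -/
theorem stmt7 {V : Type u} (E : Set (V × V)) (X Y : Set V)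
    (hX : ∀ e ∈ E, e.2 ∉ X) (hY : ∀ e ∈ E, e.1 ∉ Y)
    (x : V) (hx : x ∈ X) (y : V) (hy : y ∈ Y)
    (hinc : Incompressible E (X \ {x}) (Y \ {y})) (hjoin : Joinable E X Y) :
    Incompressible E X Y :=
  stmt7_general E X Y hX hY x hx y hinc hjoin
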